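/- Let A, B, Y be vertices of SG(n,k) with |A ∩ Y| = h', |Y ∩ B| = h'', and h* = h' + h'' ≥ 2, where 2k+2 ≤ n ≤ 4k−3. Then dist(A,B) ≤ 2 + 2h*. -/

import Mathlib

/-- The cycle graph `C_n` on vertex set `ZMod n` (representing `{1,…,n}` cyclically). -/
def CycleGraph (n : ℕ) : SimpleGraph (ZMod n) where
  Adj i j := i ≠ j ∧ (i + 1 = j ∨ j + 1 = i)
  symm := ⟨fun i j ⟨h, h2⟩ => ⟨h.symm, h2.symm⟩⟩
  loopless := ⟨fun i ⟨h, _⟩ => h rfl⟩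

/-- A subset of `ZMod n` is 2-stable if it contains no two cyclically consecutive elements. -/
def Stable2 (n : ℕ) (S : Finset (ZMod n)) : Prop := ∀ i ∈ S, i + 1 ∉ S

/-- Vertices of the Schrijver graph: 2-stable `k`-subsets of `{1,…,n}`. -/
def SGVert (n k : ℕ) : Type := {S : Finset (ZMod n) // S.card = k ∧ Stable2 n S}

/-- The Schrijver graph `SG(n,k)`: 2-stable `k`-subsets, adjacent iff disjoint. -/
def SG (n k : ℕ) : SimpleGraph (SGVert n k) where
  Adj A B := A ≠ B ∧ Disjoint A.1 B.1
  symm := ⟨fun A B ⟨h, h2⟩ => ⟨h.symm, h2.symm⟩⟩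
  loopless := ⟨fun A ⟨h, _⟩ => h rfl⟩

/-!
Let `X, Z` be 2-stable `k`-sets with `x ∈ X ∩ Z`. If some `y ∉ X ∪ Z` has no neighbour in
`X \ {x}`, then `X' = X - x + y` is again a vertex, `X` and `X'` have the common neighbour
`X + 1` or `X - 1`, and `|X' ∩ Z| = |X ∩ Z| - 1`; hence `dist(X, Z) ≤ 2|X ∩ Z| + 1`, and the
bound follows by going through `Y`.

Such a `y` exists as soon as `n > 2k`. Otherwise every `x ∈ X ∩ Z` has `x ± 2 ∈ X`, and every
position with no neighbour in `X` lies in `Z`. Then gaps between consecutive elements of `X` have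
length at most `4`, and sending each `z ∈ Z` to the nearest element of `X` weakly below it is
injective, hence onto `X`. Reading this off at `x - 2` shows that `X ∩ Z` is closed under
`x ↦ x - 2`, so it contains a whole coset of `⟨2⟩` and `n ≤ 2|X ∩ Z| ≤ 2k`.
-/

open Finset

variable {n k : ℕ}

theorem le_two_mul_card_of_forall_sub_two_mem {S : Finset (ZMod n)} (hS : S.Nonempty)
    (h : ∀ x ∈ S, x - 2 ∈ S) : n ≤ 2 * #S := by
  obtain ⟨x, hx⟩ := hS
  have hmem : ∀ j : ℕ, x - 2 * j ∈ S := by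
    intro j
    induction j with
    | zero => simpa using hx
    | succ j ih => simpa [mul_add, ← sub_sub] using h _ ih
  by_contra! hlt
  have hinj : Set.InjOn (fun j : ℕ => x - 2 * j) (range (#S + 1)) := by
    intro a ha b hb hab
    simp only [coe_range, Set.mem_Iio] at ha hb
    have hab' : ((2 * a : ℕ) : ZMod n) = ((2 * b : ℕ) : ZMod n) := by
      push_cast
      exact sub_right_injective hab
    rw [ZMod.natCast_eq_natCast_iff', Nat.mod_eq_of_lt (by omega),
      Nat.mod_eq_of_lt (by omega)] at hab'
    omega
  have := card_le_card_of_injOn _ (fun j _ => hmem j) hinj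
  simp at this

namespace Stable2

variable {S X Z : Finset (ZMod n)}

theorem exists_sub_mem_of_free_subset (hZ : Stable2 n Z)
    (hfree : ∀ y, y ∉ X → y + 1 ∉ X → y - 1 ∉ X → y ∈ Z) (v : ZMod n) :
    ∃ m : ℕ, m ≤ 3 ∧ v - m ∈ X := by
  by_contra! h
  have h0 := h 0 le_add_self
  have h1 := h 1 (by norm_num)
  have h2 := h 2 (by norm_num)
  have h3 := h 3 le_rfl
  push_cast at h0 h1 h2 h3
  have hv1 : v - 1 ∈ Z := hfree _ h1 (by simpa using h0) (by convert h2 using 2; ring)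
  have hv2 : v - 2 ∈ Z := hfree _ h2 (by convert h1 using 2; ring) (by convert h3 using 2; ring)
  exact hZ _ hv2 (by convert hv1 using 1; ring)

theorem add_notMem_of_gap (hZ : Stable2 n Z) (hadd : ∀ x ∈ X, x ∈ Z → x + 2 ∈ X)
    (hfree : ∀ y, y ∉ X → y + 1 ∉ X → y - 1 ∉ X → y ∈ Z) {a : ZMod n} (ha : a ∈ X)
    {i j : ℕ} (hij : i < j) (hj : j ≤ 3) (hgap : ∀ m : ℕ, 0 < m → m ≤ j → a + m ∉ X)
    (hi : a + i ∈ Z) : a + j ∉ Z := by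
  intro hjZ
  interval_cases j <;> interval_cases i <;> push_cast at hi hjZ
  · exact hZ a (by simpa using hi) hjZ
  · exact hgap 2 (by omega) le_rfl (by simpa using hadd a ha (by simpa using hi))
  · exact hZ _ hi (by convert hjZ using 1; ring)
  · exact hgap 2 (by omega) (by omega) (by simpa using hadd a ha (by simpa using hi))
  · -- `a + 2` is free, hence in `Z` next to `a + 1`
    have g1 : a + 1 ∉ X := by simpa using hgap 1 (by omega) (by omega)
    have g2 : a + 2 ∉ X := by simpa using hgap 2 (by omega) (by omega)
    have g3 : a + 3 ∉ X := by simpa using hgap 3 (by omega) le_rfl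
    have h2 : a + 2 ∈ Z :=
      hfree _ g2 (by convert g3 using 2; ring) (by convert g1 using 2; ring)
    exact hZ _ hi (by convert h2 using 1; ring)
  · exact hZ _ hi (by convert hjZ using 1; ring)

theorem sub_two_mem_of_free_subset (hZ : Stable2 n Z) (hcard : #X ≤ #Z)
    (hadd : ∀ x ∈ X, x ∈ Z → x + 2 ∈ X)
    (hfree : ∀ y, y ∉ X → y + 1 ∉ X → y - 1 ∉ X → y ∈ Z)
    {x : ZMod n} (hxX : x ∈ X) (hxZ : x ∈ Z) (hx2 : x - 2 ∈ X) : x - 2 ∈ Z := by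
  classical
  have hnear := hZ.exists_sub_mem_of_free_subset hfree
  -- `v - d v` is the nearest element of `X` weakly below `v`
  let d v := Nat.find (hnear v)
  have hd_le v : d v ≤ 3 := (Nat.find_spec (hnear v)).1
  have hd_mem v : v - d v ∈ X := (Nat.find_spec (hnear v)).2
  have hd_min v m (hm : m < d v) : v - m ∉ X :=
    fun h => Nat.find_min (hnear v) hm ⟨by grind, h⟩
  have hinj : Set.InjOn (fun v => v - d v) Z := by
    intro z hz z' hz' heq
    rw [mem_coe] at hz hz'
    wlog h : d z ≤ d z' generalizing z z'
    · exact (this hz' hz heq.symm (by omega)).symm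
    obtain h | h := h.eq_or_lt
    · simpa [h] using heq
    refine absurd hz' ?_
    have hgap : ∀ m : ℕ, 0 < m → m ≤ d z' → z - d z + m ∉ X := by
      intro m hm hmj
      convert hd_min z' (d z' - m) (by omega) using 2
      rw [Nat.cast_sub hmj]
      linear_combination heq
    convert hZ.add_notMem_of_gap hadd hfree (hd_mem z) h (hd_le z') hgap (by simpa using hz)
      using 2
    linear_combination -heq
  have himage : Z.image (fun v => v - d v) = X := by
    refine eq_of_subset_of_card_le (fun a ha => ?_) (by rwa [card_image_of_injOn hinj])
    obtain ⟨z, -, rfl⟩ := mem_image.mp ha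
    exact hd_mem z
  obtain ⟨z, hz, hzx⟩ := mem_image.mp (himage ▸ hx2)
  have hdz : d z < 2 := by
    by_contra! h
    refine hd_min z (d z - 2) (by omega) ?_
    rw [Nat.cast_sub h]
    convert hxX using 1
    push_cast
    linear_combination hzx
  obtain h | h : d z = 0 ∨ d z = 1 := by omega
  · rw [h, Nat.cast_zero, sub_zero] at hzx
    rwa [← hzx]
  · -- `z = x - 1` and `x` would be adjacent elements of `Z`
    rw [h, Nat.cast_one] at hzx
    exact absurd hxZ (by simpa [show z + 1 = x by linear_combination hzx] using hZ z hz)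

theorem exists_swap (hX : Stable2 n X) (hZ : Stable2 n Z)
    (hcard : #X ≤ #Z) (hn : 2 * #X < n) (hXZ : (X ∩ Z).Nonempty) :
    ∃ x ∈ X ∩ Z, ∃ y, y ∉ X ∧ y ∉ Z ∧ y + 1 ∉ X.erase x ∧ y - 1 ∉ X.erase x := by
  by_contra! h
  obtain ⟨x₀, hx₀⟩ := hXZ
  have hadd : ∀ x ∈ X, x ∈ Z → x + 2 ∈ X := by
    intro x hxX hxZ
    by_contra hx2
    have hm := h x (mem_inter.2 ⟨hxX, hxZ⟩) (x + 1) (hX x hxX) (hZ x hxZ) fun hm =>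
      hx2 (by simpa [add_assoc, one_add_one_eq_two] using mem_of_mem_erase hm)
    simp at hm
  have hsub : ∀ x ∈ X, x ∈ Z → x - 2 ∈ X := by
    intro x hxX hxZ
    have hm := h x (mem_inter.2 ⟨hxX, hxZ⟩) (x - 1) (fun hm => hX _ hm (by simpa using hxX))
      (fun hm => hZ _ hm (by simpa using hxZ)) (by simp)
    simpa [sub_sub, one_add_one_eq_two] using mem_of_mem_erase hm
  have hfree : ∀ y, y ∉ X → y + 1 ∉ X → y - 1 ∉ X → y ∈ Z := by
    intro y hy hy₁ hy₂
    by_contra hyZ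
    exact hy₂ (mem_of_mem_erase (h x₀ hx₀ y hy hyZ fun hm => hy₁ (mem_of_mem_erase hm)))
  have hclosed : ∀ x ∈ X ∩ Z, x - 2 ∈ X ∩ Z := by
    intro x hx
    obtain ⟨hxX, hxZ⟩ := mem_inter.1 hx
    exact mem_inter.2 ⟨hsub x hxX hxZ,
      hZ.sub_two_mem_of_free_subset hcard hadd hfree hxX hxZ (hsub x hxX hxZ)⟩
  have := le_two_mul_card_of_forall_sub_two_mem ⟨x₀, hx₀⟩ hclosed
  have := card_le_card (inter_subset_left : X ∩ Z ⊆ X)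
  omega

theorem image_add (hS : Stable2 n S) (c : ZMod n) : Stable2 n (S.image (· + c)) := by
  intro i hi hi₁
  obtain ⟨a, ha, rfl⟩ := mem_image.1 hi
  obtain ⟨b, hb, hab⟩ := mem_image.1 hi₁
  exact hS a ha (by rwa [show a + 1 = b by linear_combination -hab])

theorem disjoint_image_add (hS : Stable2 n S) {c : ZMod n} (hc : c = 1 ∨ c = -1) :
    Disjoint S (S.image (· + c)) := by
  refine disjoint_left.2 fun i hi hi' => ?_
  obtain ⟨a, ha, rfl⟩ := mem_image.1 hi'
  rcases hc with rfl | rfl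
  · exact hS a ha hi
  · exact hS _ hi (by simpa using ha)

theorem insert_erase (hS : Stable2 n S) {x y : ZMod n} (hx : x ∈ S)
    (hy₁ : y + 1 ∉ S.erase x) (hy₂ : y - 1 ∉ S.erase x) : Stable2 n (insert y (S.erase x)) := by
  intro i hi hi₁
  rcases mem_insert.1 hi with rfl | hi
  · rcases mem_insert.1 hi₁ with h | h
    · -- `1 = 0` in `ZMod n` contradicts the stability of `S ∋ x`
      exact hS x hx (by simpa [add_eq_left.1 h] using hx)
    · exact hy₁ h
  · rcases mem_insert.1 hi₁ with h | h
    · exact hy₂ (by rwa [← h, add_sub_cancel_right])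
    · exact hS i (mem_of_mem_erase hi) (mem_of_mem_erase h)

end Stable2

namespace SG

theorem adj_of_disjoint {A B : SGVert n k} (hA : A.1.Nonempty) (h : Disjoint A.1 B.1) :
    (SG n k).Adj A B :=
  ⟨fun hAB => hA.ne_empty ((disjoint_self_iff_empty _).1 (hAB ▸ h)), h⟩

theorem exists_walk_insert_erase (hn : 2 < n) (X : SGVert n k) {x y : ZMod n} (hx : x ∈ X.1)
    (hy : y ∉ X.1) (hy₁ : y + 1 ∉ X.1.erase x) (hy₂ : y - 1 ∉ X.1.erase x) :
    ∃ X' : SGVert n k, X'.1 = insert y (X.1.erase x) ∧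
      ∃ w : (SG n k).Walk X X', w.length = 2 := by
  have hcard : #(insert y (X.1.erase x)) = k := by
    rw [card_insert_of_notMem fun h => hy (mem_of_mem_erase h), card_erase_of_mem hx,
      Nat.sub_add_cancel (card_pos.2 ⟨x, hx⟩), X.2.1]
  let X' : SGVert n k := ⟨_, hcard, X.2.2.insert_erase hx hy₁ hy₂⟩
  -- `y ± 1` cannot both be `x`, so `y` stays off one of the shifts `X ± 1`
  obtain ⟨c, hc, hyc⟩ : ∃ c : ZMod n, (c = 1 ∨ c = -1) ∧ y - c ∉ X.1 := by
    by_contra! h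
    have h₁ : y - 1 = x := by_contra fun hne => hy₂ (mem_erase.2 ⟨hne, h 1 (.inl rfl)⟩)
    have h₂ : y + 1 = x := by_contra fun hne =>
      hy₁ (mem_erase.2 ⟨hne, by simpa using h (-1) (.inr rfl)⟩)
    have : ((2 : ℕ) : ZMod n) = 0 := by push_cast; linear_combination h₂ - h₁
    exact absurd ((ZMod.natCast_eq_zero_iff 2 n).1 this) (Nat.not_dvd_of_pos_of_lt two_pos hn)
  let C : SGVert n k := ⟨X.1.image (· + c),
    by rw [card_image_of_injective _ (add_left_injective c), X.2.1], X.2.2.image_add c⟩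
  have hXC : Disjoint X.1 C.1 := X.2.2.disjoint_image_add hc
  have hCX' : Disjoint C.1 X'.1 := by
    refine disjoint_insert_right.2 ⟨fun hyC => hyc ?_, hXC.symm.mono_right (erase_subset x X.1)⟩
    obtain ⟨a, ha, rfl⟩ := mem_image.1 hyC
    simpa using ha
  have hC : C.1.Nonempty := ⟨x + c, mem_image_of_mem _ hx⟩
  exact ⟨X', rfl, .cons (adj_of_disjoint ⟨x, hx⟩ hXC) (.cons (adj_of_disjoint hC hCX') .nil), rfl⟩

theorem exists_walk_length_le (hn : 2 * k < n) (X Z : SGVert n k) :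
    ∃ w : (SG n k).Walk X Z, w.length ≤ 2 * #(X.1 ∩ Z.1) + 1 := by
  induction h : #(X.1 ∩ Z.1) generalizing X with
  | zero =>
    by_cases hXZ : X = Z
    · subst hXZ
      exact ⟨.nil, by simp⟩
    · exact ⟨.cons ⟨hXZ, disjoint_iff_inter_eq_empty.2 (card_eq_zero.1 h)⟩ .nil, le_rfl⟩
  | succ t ih =>
    obtain ⟨x, hx, y, hyX, hyZ, hy₁, hy₂⟩ := X.2.2.exists_swap Z.2.2 (X.2.1.trans Z.2.1.symm).le
      (by rwa [X.2.1]) (card_pos.1 (by omega))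
    obtain ⟨hxX, hxZ⟩ := mem_inter.1 hx
    have hk : 0 < k := X.2.1 ▸ card_pos.2 ⟨x, hxX⟩
    obtain ⟨X', hX', w, hw⟩ := exists_walk_insert_erase (by omega) X hxX hyX hy₁ hy₂
    have hX'Z : #(X'.1 ∩ Z.1) = t := by
      rw [hX', insert_inter_of_notMem hyZ, erase_inter, card_erase_of_mem hx, h,
        Nat.add_sub_cancel]
    obtain ⟨w', hw'⟩ := ih X' hX'Z
    exact ⟨w.append w', by rw [SimpleGraph.Walk.length_append]; omega⟩

end SG

theorem stmt13_general (n k h' h'' : ℕ) (h1 : 2 * k + 2 ≤ n)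
    (A B Y : SGVert n k) (hcap1 : (A.1 ∩ Y.1).card = h') (hcap2 : (Y.1 ∩ B.1).card = h'') :
    (SG n k).dist A B ≤ 2 + 2 * (h' + h'') := by
  obtain ⟨w₁, hw₁⟩ := SG.exists_walk_length_le (by omega) A Y
  obtain ⟨w₂, hw₂⟩ := SG.exists_walk_length_le (by omega) Y B
  calc (SG n k).dist A B ≤ (w₁.append w₂).length := SimpleGraph.dist_le _
    _ = w₁.length + w₂.length := SimpleGraph.Walk.length_append _ _
    _ ≤ 2 + 2 * (h' + h'') := by omega

theorem stmt13 (n k h' h'' : ℕ) (h1 : 2 * k + 2 ≤ n) (h2 : n ≤ 4 * k - 3)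
    (A B Y : SGVert n k) (hcap1 : (A.1 ∩ Y.1).card = h') (hcap2 : (Y.1 ∩ B.1).card = h'')
    (hsum : 2 ≤ h' + h'') :
    (SG n k).dist A B ≤ 2 + 2 * (h' + h'') :=
  stmt13_general n k h' h'' h1 A B Y hcap1 hcap2
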